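/- Let i ∈ R(u,v) be a reduced word and {i,j} an edge of Π. Suppose A ≺ C ≺ C' are three vertices of the (i,j)-strip of Σ(i) such that c(A) = −c(C) and y(C) = −y(C'). Then there exists a vertex B of the strip with A ≺ B ⪯ C such that B is the left end of an inclined edge of the strip. -/

import Mathlib

/-!
Let `B` be the first strip vertex after `A` whose charge differs from that of `A` (`C` is a
candidate), `Z` the last strip vertex before `B`, and `D` the first vertex after `B` on the level
opposite to `B` (`C` or `C'` is a candidate). Like every strip vertex from `A` to `B`, `Z` has the
charge of `A`, opposite to that of `B`. If `Z` lies on the level of `B`, then `Z = B⁻` and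
`D⁻ ≺ Z`, and opposite charges on one level mean opposite signs: condition (iii). Otherwise
`Z = D⁻ ≺ B` and `B⁻ ≺ Z`, and opposite charges on different levels mean equal signs:
condition (ii). Either way `{B, D}` is an inclined edge.
-/

open scoped Classical

namespace SLC

variable {V : Type*} [DecidableEq V]

/-- The simply-laced Coxeter matrix associated with a simple graph `P`:
`M i i = 1`, `M i j = 3` if `i` and `j` are adjacent, and `M i j = 2` otherwise. -/
noncomputable def coxeterMatrix (P : SimpleGraph V) : CoxeterMatrix V where
  M := fun i j => if i = j then 1 else if P.Adj i j then 3 else 2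
  isSymm := by
    ext i j
    change (if j = i then 1 else if P.Adj j i then 3 else 2) = (if i = j then 1 else if P.Adj i j then 3 else 2)
    by_cases h : i = j
    · subst h; rfl
    · rw [if_neg (Ne.symm h), if_neg h]
      by_cases ha : P.Adj i j
      · rw [if_pos ha.symm, if_pos ha]
      · rw [if_neg (fun hc => ha hc.symm), if_neg ha]
  diagonal := by intro i; simp
  off_diagonal := by
    intro i i' h
    change (if i = i' then 1 else if P.Adj i i' then 3 else 2) ≠ 1
    rw [if_neg h]
    split <;> omega

/-- `e` is a reduced word for the pair `(u, v)`: the subword of entries with negative sign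
(first component `false`), with signs forgotten, is a reduced word for `u`, and the subword of
entries with positive sign is a reduced word for `v`. -/
def IsRWordPair {W : Type*} [Group W] (P : SimpleGraph V)
    (cs : CoxeterSystem (coxeterMatrix P) W) (u v : W) {m : ℕ}
    (e : Fin m → Bool × V) : Prop :=
  cs.wordProd (((List.ofFn e).filter fun p => !p.1).map Prod.snd) = u ∧
    (((List.ofFn e).filter fun p => !p.1).map Prod.snd).length = cs.length u ∧
    cs.wordProd (((List.ofFn e).filter fun p => p.1).map Prod.snd) = v ∧
    (((List.ofFn e).filter fun p => p.1).map Prod.snd).length = cs.length v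

/-- `k = l⁻`: `k` is the largest index smaller than `l` carrying the same letter of `P`. -/
def IsPred {m : ℕ} (e : Fin m → Bool × V) (k l : Fin m) : Prop :=
  k < l ∧ (e k).2 = (e l).2 ∧ ∀ j, k < j → j < l → (e j).2 ≠ (e l).2

/-- The index `l` is `e`-bounded: `l⁻ > 0`, i.e. `l` has a predecessor. -/
def BoundedIdx {m : ℕ} (e : Fin m → Bool × V) (l : Fin m) : Prop :=
  ∃ k, IsPred e k l

/-- Conditions (ii) and (iii) of Definition 3.1 (inclined edges), for `k < l`. -/
def InclCond {m : ℕ} (P : SimpleGraph V) (e : Fin m → Bool × V) (k l : Fin m) : Prop :=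
  k < l ∧ P.Adj (e k).2 (e l).2 ∧
    ((∃ p, IsPred e p l ∧ p < k ∧ (∀ q, IsPred e q k → q < p) ∧ (e p).1 = (e k).1) ∨
     (∃ q, IsPred e q k ∧ (∀ p, IsPred e p l → p < q) ∧ (e q).1 = !(e k).1))

/-- `a → b` is a directed edge of the graph `Σ(e)`. -/
def DirEdge {m : ℕ} (P : SimpleGraph V) (e : Fin m → Bool × V) (a b : Fin m) : Prop :=
  (IsPred e a b ∧ (e a).1 = true) ∨ (IsPred e b a ∧ (e b).1 = false) ∨
    (InclCond P e a b ∧ (e a).1 = false) ∨ (InclCond P e b a ∧ (e b).1 = true)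

/-- `{a, b}` is an edge of the graph `Σ(e)` (in some direction). -/
def UEdge {m : ℕ} (P : SimpleGraph V) (e : Fin m → Bool × V) (a b : Fin m) : Prop :=
  DirEdge P e a b ∨ DirEdge P e b a

/-- Adjacency in the doubled graph `P̃`. -/
def TAdj (P : SimpleGraph V) (p q : Bool × V) : Prop :=
  p.1 = q.1 ∧ P.Adj p.2 q.2

/-- The negative of a letter of `P̃`. -/
def negEnt (p : Bool × V) : Bool × V := (!p.1, p.2)

/-- The combinatorial data of a 2- or 3-move: the (consecutive) positions involved. -/
inductive MoveSpec (m : ℕ) where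
  | two (a b : Fin m)
  | three (a b c : Fin m)

/-- The position of a move (the last of the positions involved). -/
def MoveSpec.pos {m : ℕ} : MoveSpec m → Fin m
  | .two _ b => b
  | .three _ _ c => c

/-- `e'` is obtained from `e` by the 2- or 3-move described by `s`. -/
def IsMove {m : ℕ} (P : SimpleGraph V) (e e' : Fin m → Bool × V) : MoveSpec m → Prop
  | .two a b => (b : ℕ) = (a : ℕ) + 1 ∧ ¬ TAdj P (e a) (e b) ∧
      e' a = e b ∧ e' b = e a ∧ ∀ l, l ≠ a → l ≠ b → e' l = e l
  | .three a b c => (b : ℕ) = (a : ℕ) + 1 ∧ (c : ℕ) = (b : ℕ) + 1 ∧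
      e c = e a ∧ TAdj P (e b) (e c) ∧
      e' a = e b ∧ e' b = e a ∧ e' c = e b ∧ ∀ l, l ≠ a → l ≠ b → l ≠ c → e' l = e l

/-- A move is trivial if it is a 2-move interchanging entries which are not opposite. -/
def MoveTrivial {m : ℕ} (e : Fin m → Bool × V) : MoveSpec m → Prop
  | .two a b => e b ≠ negEnt (e a)
  | .three _ _ _ => False

/-- The permutation `σ` associated with a move. -/
noncomputable def moveSigma {m : ℕ} (e : Fin m → Bool × V) : MoveSpec m → Equiv.Perm (Fin m)
  | .two a b => if e b = negEnt (e a) then 1 else Equiv.swap a b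
  | .three a b _ => Equiv.swap a b

/-- The skew-symmetric form `Ω` of the graph `Σ(e)`, over a commutative ring `R`. -/
noncomputable def omegaForm (R : Type*) [CommRing R] {m : ℕ} (P : SimpleGraph V)
    (e : Fin m → Bool × V) (x y : Fin m → R) : R :=
  ∑ a : Fin m, ∑ b : Fin m, if DirEdge P e a b then x a * y b - x b * y a else 0

/-- The symplectic transvection `τ_k` of the graph `Σ(e)`, over `R`. -/
noncomputable def transv (R : Type*) [CommRing R] {m : ℕ} (P : SimpleGraph V)
    (e : Fin m → Bool × V) (k : Fin m) (x : Fin m → R) : Fin m → R :=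
  x - omegaForm R P e x (Pi.single k 1) • (Pi.single k 1 : Fin m → R)

/-- The group `Γ_e ⊆ GL_m(ℤ)` generated by the transvections `τ_k`, `k ∈ B(e)`. -/
noncomputable def Gamma {m : ℕ} (P : SimpleGraph V) (e : Fin m → Bool × V) :
    Subgroup ((Fin m → ℤ) ≃ₗ[ℤ] (Fin m → ℤ)) :=
  Subgroup.closure {g | ∃ k, BoundedIdx e k ∧ ⇑g = transv ℤ P e k}

/-- The group `Γ_e(F₂)` of linear transformations of `F₂^m` generated by the reductions
modulo 2 of the transvections `τ_k`, `k ∈ B(e)`. -/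
noncomputable def GammaF2 {m : ℕ} (P : SimpleGraph V) (e : Fin m → Bool × V) :
    Subgroup (Equiv.Perm (Fin m → ZMod 2)) :=
  Subgroup.closure {g | ∃ k, BoundedIdx e k ∧ ⇑g = transv (ZMod 2) P e k}

/-- The map `φ⁺` associated with a move. -/
noncomputable def phiP {m : ℕ} (P : SimpleGraph V) (e : Fin m → Bool × V) (s : MoveSpec m)
    (x : Fin m → ℤ) : Fin m → ℤ := fun l =>
  if l = s.pos ∧ ¬ MoveTrivial e s then
    (∑ a : Fin m, if DirEdge P e a s.pos then x a else 0) - x s.pos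
  else x (moveSigma e s l)

/-- The map `φ⁻` associated with a move. -/
noncomputable def phiM {m : ℕ} (P : SimpleGraph V) (e : Fin m → Bool × V) (s : MoveSpec m)
    (x : Fin m → ℤ) : Fin m → ℤ := fun l =>
  if l = s.pos ∧ ¬ MoveTrivial e s then
    (∑ b : Fin m, if DirEdge P e s.pos b then x b else 0) - x s.pos
  else x (moveSigma e s l)

end SLC

section FirstLast

variable {ι : Type*} [LinearOrder ι] {S : ι → Prop} {a c : ι}

theorem exists_first_in_Ioc [WellFoundedLT ι] (hac : a < c) (hc : S c) :
    ∃ b, a < b ∧ b ≤ c ∧ S b ∧ ∀ x, a < x → x < b → ¬ S x := by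
  obtain ⟨b, ⟨hab, hbc, hb⟩, hmin⟩ :=
    wellFounded_lt.has_min {x | a < x ∧ x ≤ c ∧ S x} ⟨c, hac, le_rfl, hc⟩
  exact ⟨b, hab, hbc, hb, fun x hax hxb hx => hmin x ⟨hax, hxb.le.trans hbc, hx⟩ hxb⟩

theorem exists_last_in_Ico [WellFoundedGT ι] (hac : a < c) (ha : S a) :
    ∃ z, a ≤ z ∧ z < c ∧ S z ∧ ∀ x, z < x → x < c → ¬ S x := by
  obtain ⟨z, hcz, hza, hz, hmax⟩ :=
    exists_first_in_Ioc (ι := ιᵒᵈ) (S := S) (a := .toDual c) (c := .toDual a) hac ha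
  exact ⟨z, hza, hcz, hz, fun x hzx hxc => hmax x hxc hzx⟩

end FirstLast

namespace SLC

variable {V : Type*}

def OnStrip (i j : V) (p : Bool × V) : Prop :=
  p.2 = i ∨ p.2 = j

/-- The charge `c = y ε` of a strip vertex, with `true` for `+1`: the level `y` is `+1` exactly
on the letter `j`, and the sign `ε` is `+1` exactly when `p.1 = true`. -/
def charge [DecidableEq V] (j : V) (p : Bool × V) : Bool :=
  decide (p.2 = j) == p.1

theorem charge_ne_iff [DecidableEq V] {i j : V} (hij : i ≠ j) {p q : Bool × V}
    (hp : OnStrip i j p) (hq : OnStrip i j q) :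
    charge j p ≠ charge j q ↔ (p.2 = q.2 ↔ p.1 ≠ q.1) := by
  obtain ⟨s, x⟩ := p
  obtain ⟨t, y⟩ := q
  rcases hp with rfl | rfl <;> rcases hq with rfl | rfl <;> cases s <;> cases t <;>
    simp [charge, hij, hij.symm]

theorem OnStrip.of_snd_eq {i j : V} {p q : Bool × V} (hq : OnStrip i j q) (h : p.2 = q.2) :
    OnStrip i j p := by
  unfold OnStrip
  rwa [h]

theorem OnStrip.snd_eq_of_ne {i j : V} {p q r : Bool × V} (hp : OnStrip i j p)
    (hq : OnStrip i j q) (hr : OnStrip i j r) (hpq : p.2 ≠ q.2) (hrq : r.2 ≠ q.2) : p.2 = r.2 := by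
  rcases hp with hp | hp <;> rcases hq with hq | hq <;> rcases hr with hr | hr <;>
    simp_all

theorem OnStrip.adj_of_ne {P : SimpleGraph V} {i j : V} (hij : P.Adj i j) {p q : Bool × V}
    (hp : OnStrip i j p) (hq : OnStrip i j q) (hpq : p.2 ≠ q.2) : P.Adj p.2 q.2 := by
  rcases hp with hp | hp <;> rcases hq with hq | hq <;> rw [hp, hq] at hpq ⊢
  exacts [absurd rfl hpq, hij, hij.symm, absurd rfl hpq]

theorem inclCond_of_charge_ne [DecidableEq V] {P : SimpleGraph V} {m : ℕ}
    {e : Fin m → Bool × V} {i j : V} (hij : P.Adj i j) {z b d : Fin m}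
    (hz : OnStrip i j (e z)) (hb : OnStrip i j (e b)) (hd : OnStrip i j (e d))
    (hzb : z < b) (hbd : b < d) (hlevel : (e b).2 ≠ (e d).2)
    (hz_last : ∀ x, z < x → x < b → ¬ OnStrip i j (e x))
    (hd_first : ∀ x, b < x → x < d → (e x).2 ≠ (e d).2)
    (hcharge : charge j (e z) ≠ charge j (e b)) : InclCond P e b d := by
  have hle_z : ∀ x, x < b → OnStrip i j (e x) → x ≤ z := fun x hxb hx =>
    not_lt.mp fun hzx => hz_last x hzx hxb hx
  have hpred_lt_b : ∀ p, IsPred e p d → p < b := fun p ⟨hpd, hp, _⟩ => by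
    rcases lt_trichotomy p b with h | rfl | h
    exacts [h, absurd hp hlevel, absurd hp (hd_first p h hpd)]
  refine ⟨hbd, hb.adj_of_ne hij hd hlevel, ?_⟩
  by_cases hzb_lvl : (e z).2 = (e b).2
  · refine .inr ⟨z, ⟨hzb, hzb_lvl, fun x hzx hxb hx => hz_last x hzx hxb (hb.of_snd_eq hx)⟩,
      fun p hp => (hle_z p (hpred_lt_b p hp) (hd.of_snd_eq hp.2.1)).lt_of_ne ?_, ?_⟩
    · rintro rfl
      exact hlevel (hzb_lvl.symm.trans hp.2.1)
    · exact Bool.eq_not.mpr (((charge_ne_iff hij.ne hz hb).mp hcharge).mp hzb_lvl)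
  have hzd_lvl : (e z).2 = (e d).2 := hz.snd_eq_of_ne hb hd hzb_lvl hlevel.symm
  refine .inl ⟨z, ⟨hzb.trans hbd, hzd_lvl, fun x hzx hxd hx => ?_⟩, hzb,
    fun q hq => (hle_z q hq.1 (hb.of_snd_eq hq.2.1)).lt_of_ne ?_, ?_⟩
  · rcases lt_trichotomy x b with hxb | rfl | hbx
    exacts [hz_last x hzx hxb (hd.of_snd_eq hx), hlevel hx, hd_first x hbx hxd hx]
  · rintro rfl
    exact hzb_lvl hq.2.1
  · by_contra hsign
    exact hzb_lvl (((charge_ne_iff hij.ne hz hb).mp hcharge).mpr hsign)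

variable {V : Type*} [DecidableEq V] [Fintype V] {W : Type*} [Group W]

theorem exists_left_end_of_inclined_general (P : SimpleGraph V) {m : ℕ} (e : Fin m → Bool × V)
    (i j : V) (hij : P.Adj i j) (a c c' : Fin m)
    (ha : (e a).2 = i ∨ (e a).2 = j) (hc : (e c).2 = i ∨ (e c).2 = j)
    (hc' : (e c').2 = i ∨ (e c').2 = j)
    (hac : a < c) (hcc' : c < c')
    (hcharge : ((e a).2 = (e c).2) ↔ ¬ ((e a).1 = (e c).1))
    (hlvl : (e c).2 ≠ (e c').2) :
    ∃ b d : Fin m, a < b ∧ b ≤ c ∧ ((e b).2 = i ∨ (e b).2 = j) ∧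
      ((e d).2 = i ∨ (e d).2 = j) ∧ InclCond P e b d := by
  obtain ⟨b, hab, hbc, ⟨hb, hb_charge⟩, hb_first⟩ :=
    exists_first_in_Ioc (S := fun x => OnStrip i j (e x) ∧ charge j (e x) ≠ charge j (e a)) hac
      ⟨hc, ((charge_ne_iff hij.ne ha hc).mpr hcharge).symm⟩
  obtain ⟨z, haz, hzb, hz, hz_last⟩ := exists_last_in_Ico (S := fun x => OnStrip i j (e x)) hab ha
  have hz_charge : charge j (e z) = charge j (e a) := by
    rcases haz.eq_or_lt with rfl | haz
    · rfl
    · exact not_not.mp fun h => hb_first z haz hzb ⟨hz, h⟩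
  obtain ⟨c₀, hbc₀, hc₀, hc₀_lvl⟩ : ∃ c₀, b < c₀ ∧ OnStrip i j (e c₀) ∧ (e b).2 ≠ (e c₀).2 := by
    by_cases hbc_lvl : (e b).2 = (e c).2
    · exact ⟨c', hbc.trans_lt hcc', hc', hbc_lvl ▸ hlvl⟩
    · exact ⟨c, hbc.lt_of_ne (by rintro rfl; exact hbc_lvl rfl), hc, hbc_lvl⟩
  obtain ⟨d, hbd, -, hd_lvl, hd_first⟩ :=
    exists_first_in_Ioc (S := fun x => (e x).2 = (e c₀).2) hbc₀ rfl
  have hd : OnStrip i j (e d) := hc₀.of_snd_eq hd_lvl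
  refine ⟨b, d, hab, hbc, hb, hd, inclCond_of_charge_ne hij hz hb hd hzb hbd (hd_lvl ▸ hc₀_lvl)
    hz_last (fun x hbx hxd => hd_lvl ▸ hd_first x hbx hxd) (hz_charge ▸ hb_charge.symm)⟩

/-- Lemma 4.2: if `A ≺ C ≺ C'` are strip vertices with `c(A) = -c(C)` and `y(C) = -y(C')`,
then some vertex `B` with `A ≺ B ⪯ C` is the left end of an inclined edge of the strip. -/
theorem exists_left_end_of_inclined (P : SimpleGraph V)
    (cs : CoxeterSystem (coxeterMatrix P) W)
    (u v : W) {m : ℕ} (hm : m = cs.length u + cs.length v)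
    (e : Fin m → Bool × V) (he : IsRWordPair P cs u v e)
    (i j : V) (hij : P.Adj i j) (a c c' : Fin m)
    (ha : (e a).2 = i ∨ (e a).2 = j) (hc : (e c).2 = i ∨ (e c).2 = j)
    (hc' : (e c').2 = i ∨ (e c').2 = j)
    (hac : a < c) (hcc' : c < c')
    (hcharge : ((e a).2 = (e c).2) ↔ ¬ ((e a).1 = (e c).1))
    (hlvl : (e c).2 ≠ (e c').2) :
    ∃ b d : Fin m, a < b ∧ b ≤ c ∧ ((e b).2 = i ∨ (e b).2 = j) ∧
      ((e d).2 = i ∨ (e d).2 = j) ∧ InclCond P e b d :=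
  exists_left_end_of_inclined_general P e i j hij a c c' ha hc hc' hac hcc' hcharge hlvl

end SLC
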